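/- arXiv:2204.08845 — 3 statements merged into one kernel-verified Lean document; each statement's English description precedes it below -/
import Mathlib

section
/- Let Θ be a measurable space with a probability measure P, let D be a set of decision rules and R : Θ × D → [0,∞) a risk function such that θ ↦ R(θ,δ) is measurable for every δ ∈ D. Let δ̌ ∈ D be a Bayes solution with respect to P, and suppose there is a constant c ≥ 0 with R(θ,δ̌) = c for all θ ∈ Θ. Then δ̌ is minimax, i.e. sup_{θ∈Θ} R(θ,δ̌) = inf_{δ∈D} sup_{θ∈Θ} R(θ,δ). -/
open MeasureTheory
open scoped NNReal ENNReal

/-- A Bayes solution with constant risk is minimax. -/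
theorem bayes_solution_constant_risk_minimax
    {Θ : Type*} [MeasurableSpace Θ]
    (P : Measure Θ) [IsProbabilityMeasure P]
    {D : Type*} (R : Θ → D → ℝ≥0)
    (hmeas : ∀ δ : D, Measurable (fun θ => R θ δ))
    (δB : D)
    (hBayes : ∫⁻ θ, (R θ δB : ℝ≥0∞) ∂P = ⨅ δ : D, ∫⁻ θ, (R θ δ : ℝ≥0∞) ∂P)
    (c : ℝ≥0) (hconst : ∀ θ : Θ, R θ δB = c) :
    (⨆ θ : Θ, (R θ δB : ℝ≥0∞)) = ⨅ δ : D, ⨆ θ : Θ, (R θ δ : ℝ≥0∞) := by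
  have hint : ∫⁻ θ, (R θ δB : ℝ≥0∞) ∂P = (c : ℝ≥0∞) := by
    simp [hconst, lintegral_const]
  refine le_antisymm (le_iInf fun δ => iSup_le fun θ => ?_) (iInf_le _ δB)
  have h1 : (c : ℝ≥0∞) ≤ ∫⁻ θ, (R θ δ : ℝ≥0∞) ∂P := by
    rw [← hint, hBayes]; exact iInf_le _ δ
  have h2 : ∫⁻ θ, (R θ δ : ℝ≥0∞) ∂P ≤ ⨆ θ : Θ, (R θ δ : ℝ≥0∞) := by
    calc ∫⁻ θ, (R θ δ : ℝ≥0∞) ∂P ≤ ∫⁻ _, (⨆ θ : Θ, (R θ δ : ℝ≥0∞)) ∂P :=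
          lintegral_mono fun θ => le_iSup (fun θ => (R θ δ : ℝ≥0∞)) θ
      _ = ⨆ θ : Θ, (R θ δ : ℝ≥0∞) := by simp
  rw [hconst θ]
  exact h1.trans h2
end

section
/- Let Θ be a measurable space, D a set of decision rules and R : Θ × D → [0,∞) a risk function such that θ ↦ R(θ,δ) is measurable for every δ ∈ D. Let (P_n)_{n≥1} be a sequence of probability measures on Θ and, for each n, let δ̌_n ∈ D be a Bayes solution with respect to P_n. If δ ∈ D satisfies sup_{θ∈Θ} R(θ,δ) ≤ limsup_{n→∞} ∫_Θ R(θ,δ̌_n) dP_n(θ), then δ is minimax, i.e. sup_{θ∈Θ} R(θ,δ) = inf_{δ'∈D} sup_{θ∈Θ} R(θ,δ'). -/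
open MeasureTheory Filter
open scoped NNReal ENNReal

/-- If the supremum risk of a rule is bounded by the limit superior of the Bayes
risks of a sequence of Bayes solutions, then the rule is minimax. -/
theorem minimax_of_le_limsup_bayes_risk
    {Θ : Type*} [MeasurableSpace Θ]
    {D : Type*} (R : Θ → D → ℝ≥0)
    (hmeas : ∀ δ : D, Measurable (fun θ => R θ δ))
    (P : ℕ → Measure Θ) (hP : ∀ n : ℕ, IsProbabilityMeasure (P n))
    (δB : ℕ → D)
    (hBayes : ∀ n : ℕ,
      ∫⁻ θ, (R θ (δB n) : ℝ≥0∞) ∂(P n) = ⨅ δ : D, ∫⁻ θ, (R θ δ : ℝ≥0∞) ∂(P n))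
    (δ : D)
    (hle : (⨆ θ : Θ, (R θ δ : ℝ≥0∞)) ≤
      limsup (fun n : ℕ => ∫⁻ θ, (R θ (δB n) : ℝ≥0∞) ∂(P n)) atTop) :
    (⨆ θ : Θ, (R θ δ : ℝ≥0∞)) = ⨅ δ' : D, ⨆ θ : Θ, (R θ δ' : ℝ≥0∞) := by
  apply le_antisymm
  · refine le_iInf fun δ' => hle.trans ?_
    have h : ∀ n, ∫⁻ θ, (R θ (δB n) : ℝ≥0∞) ∂(P n) ≤ ⨆ θ : Θ, (R θ δ' : ℝ≥0∞) := by
      intro n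
      rw [hBayes n]
      refine (iInf_le _ δ').trans ?_
      calc ∫⁻ θ, (R θ δ' : ℝ≥0∞) ∂(P n)
          ≤ ∫⁻ _, (⨆ θ : Θ, (R θ δ' : ℝ≥0∞)) ∂(P n) :=
            lintegral_mono fun θ => le_iSup (fun θ => (R θ δ' : ℝ≥0∞)) θ
        _ = ⨆ θ : Θ, (R θ δ' : ℝ≥0∞) := by
            rw [lintegral_const, (hP n).measure_univ, mul_one]
    calc limsup (fun n : ℕ => ∫⁻ θ, (R θ (δB n) : ℝ≥0∞) ∂(P n)) atTop
        ≤ limsup (fun _ : ℕ => ⨆ θ : Θ, (R θ δ' : ℝ≥0∞)) atTop :=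
          limsup_le_limsup (Eventually.of_forall h)
      _ = ⨆ θ : Θ, (R θ δ' : ℝ≥0∞) := limsup_const _
  · exact iInf_le _ δ
end

section
/- Let Θ be a measurable space, D a set of decision rules and R : Θ × D → [0,∞) a risk function such that θ ↦ R(θ,δ) is measurable for every δ ∈ D. Let δ ∈ D satisfy R(θ,δ) = c for all θ ∈ Θ, for some constant c ≥ 0. If there exists a sequence of probability measures (P_n)_{n≥1} on Θ with Bayes solutions δ̌_n ∈ D with respect to P_n such that lim_{n→∞} ∫_Θ R(θ,δ̌_n) dP_n(θ) = c, then δ is minimax, i.e. sup_{θ∈Θ} R(θ,δ) = inf_{δ'∈D} sup_{θ∈Θ} R(θ,δ'). -/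
open MeasureTheory Filter
open scoped NNReal ENNReal

/-- A rule with constant risk `c` is minimax as soon as there is a sequence of
priors whose Bayes risks converge to `c`. -/
theorem minimax_of_constant_risk_tendsto_bayes_risk
    {Θ : Type*} [MeasurableSpace Θ]
    {D : Type*} (R : Θ → D → ℝ≥0)
    (hmeas : ∀ δ : D, Measurable (fun θ => R θ δ))
    (δ : D) (c : ℝ≥0) (hconst : ∀ θ : Θ, R θ δ = c)
    (P : ℕ → Measure Θ) (hP : ∀ n : ℕ, IsProbabilityMeasure (P n))
    (δB : ℕ → D)
    (hBayes : ∀ n : ℕ,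
      ∫⁻ θ, (R θ (δB n) : ℝ≥0∞) ∂(P n) = ⨅ δ' : D, ∫⁻ θ, (R θ δ' : ℝ≥0∞) ∂(P n))
    (hlim : Tendsto (fun n : ℕ => ∫⁻ θ, (R θ (δB n) : ℝ≥0∞) ∂(P n)) atTop
      (nhds (c : ℝ≥0∞))) :
    (⨆ θ : Θ, (R θ δ : ℝ≥0∞)) = ⨅ δ' : D, ⨆ θ : Θ, (R θ δ' : ℝ≥0∞) := by

  haveI := hP 0
  have hΘ : Nonempty Θ := by
    by_contra h
    have h1 : (P 0) Set.univ = 1 := measure_univ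
    rw [Set.univ_eq_empty_iff.mpr (not_nonempty_iff.mp h), measure_empty] at h1
    exact zero_ne_one h1
  have hsup : (⨆ θ : Θ, (R θ δ : ℝ≥0∞)) = (c : ℝ≥0∞) := by
    simp [hconst]
  rw [hsup]
  refine le_antisymm (le_iInf fun δ' => ?_) (iInf_le_of_le δ hsup.le)
  refine le_of_tendsto' hlim fun n => ?_
  haveI := hP n
  calc ∫⁻ θ, (R θ (δB n) : ℝ≥0∞) ∂(P n)
      ≤ ∫⁻ θ, (R θ δ' : ℝ≥0∞) ∂(P n) := (hBayes n).le.trans (iInf_le _ δ')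
    _ ≤ ∫⁻ _, (⨆ θ' : Θ, (R θ' δ' : ℝ≥0∞)) ∂(P n) :=
        lintegral_mono fun θ => le_iSup (fun θ' => (R θ' δ' : ℝ≥0∞)) θ
    _ = ⨆ θ' : Θ, (R θ' δ' : ℝ≥0∞) := by
        rw [lintegral_const, measure_univ, mul_one]
end
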